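/- arXiv:2103.06928 — 10 statements merged into one kernel-verified Lean document; each statement's English description precedes it below -/
import Mathlib

section
/- In every finite n-person game (A_i, u_i)_{i∈N}, the conditional extension (S_i, U_i)_{i∈N} has a pure conditional strategy equilibrium: there exists a conditional strategy profile s* such that for every player i and every conditional strategy s'_i of i, U_i(s*) ≥ U_i(s'_i, s*_{-i}). -/
namespace CondStrat

open Function
open scoped Classical

/-- A fixed point of a pure conditional strategy profile. -/
def FixPt {N : Type*} {A : N → Type*}
    (s : ∀ i, (∀ j, j ≠ i → A j) → A i) (a : ∀ i, A i) : Prop :=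
  ∀ i, s i (fun j _ => a j) = a i

/-- `a` is a distinguished fixed point of `s`: a fixed point whose payoffs weakly
Pareto dominate those of every fixed point of `s`.  A profile `s` is an
*agreement* iff it admits such a fixed point. -/
def BestFixPt {N : Type*} {A : N → Type*} (u : N → (∀ i, A i) → ℝ)
    (s : ∀ i, (∀ j, j ≠ i → A j) → A i) (a : ∀ i, A i) : Prop :=
  FixPt s a ∧ ∀ a', FixPt s a' → ∀ i, u i a' ≤ u i a

/-- The payoff of player `i` in the conditional extension: the payoff at the
distinguished fixed point if `s` is an agreement, and `0` otherwise.  (Any two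
distinguished fixed points yield the same payoffs, so this is well defined.) -/
noncomputable def U {N : Type*} {A : N → Type*} (u : N → (∀ i, A i) → ℝ)
    (s : ∀ i, (∀ j, j ≠ i → A j) → A i) (i : N) : ℝ :=
  if h : ∃ a, BestFixPt u s a then u i h.choose else 0

/-- Conditional strategy equilibrium: no unilaterally profitable deviation. -/
def CSE {N : Type*} {A : N → Type*} [DecidableEq N] (u : N → (∀ i, A i) → ℝ)
    (s : ∀ i, (∀ j, j ≠ i → A j) → A i) : Prop :=
  ∀ (i : N) (s' : (∀ j, j ≠ i → A j) → A i), U u (Function.update s i s') i ≤ U u s i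

/-- Strong conditional equilibrium: no nonempty coalition has a joint deviation
making all of its members strictly better off. -/
def StrongCE {N : Type*} {A : N → Type*} [DecidableEq N] (u : N → (∀ i, A i) → ℝ)
    (s : ∀ i, (∀ j, j ≠ i → A j) → A i) : Prop :=
  ¬ ∃ (C : Finset N) (s' : ∀ i, (∀ j, j ≠ i → A j) → A i),
      C.Nonempty ∧ (∀ j ∉ C, s' j = s j) ∧ ∀ i ∈ C, U u s i < U u s' i


/-! Order the players and build a profile `a` recursively: player `i` picks an action maximizing
the worst payoff he can get when everybody below `i` plays `a` and `i` plays that action. In the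
equilibrium profile every player plays `a` as long as nobody below him has deviated from `a`; once
someone has, the players above the first deviator `k` switch to a profile minimizing `u k` among
those in which the players below `k` play `a` and `k` plays his actual action.

In a fixed point `b ≠ a` of a deviation by `i`, the first deviation from `a` must be by `i` itself,
since every other player answers `a` below him with `a`. So `b` is the punishment of `i`, which by
the choice of `a i` pays `i` at most `u i a`. Applied to the undeviated profile, this also shows
that `a` is a distinguished fixed point. -/

theorem exists_forall_lt_eq_of_ne {N : Type*} {A : N → Type*} [Preorder N] [WellFoundedLT N]
    {a b : ∀ i, A i} (h : b ≠ a) : ∃ k, b k ≠ a k ∧ ∀ l < k, b l = a l := by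
  obtain ⟨k, hk, hmin⟩ := wellFounded_lt.has_min {l | b l ≠ a l} (Function.ne_iff.1 h)
  exact ⟨k, hk, fun l hl => not_not.1 fun hne => hmin l hne hl⟩

section Construction

variable {N : Type*} {A : N → Type*} [LinearOrder N]

def completions (i : N) (p : ∀ j, j < i → A j) (x : A i) : Set (∀ j, A j) :=
  {z | (∀ j (h : j < i), z j = p j h) ∧ z i = x}

theorem completions_nonempty [∀ i, Nonempty (A i)] (i : N) (p : ∀ j, j < i → A j) (x : A i) :
    (completions i p x).Nonempty := by
  refine ⟨fun j => if h : j < i then p j h else update (fun l => Classical.arbitrary (A l)) i x j,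
    fun j h => dif_pos h, ?_⟩
  simp only [lt_irrefl, dite_false, update_self]

variable [Finite N] [∀ i, Finite (A i)] [∀ i, Nonempty (A i)] (u : N → (∀ i, A i) → ℝ)

theorem exists_min_completions (i : N) (p : ∀ j, j < i → A j) (x : A i) :
    ∃ z ∈ completions i p x, ∀ z' ∈ completions i p x, u i z ≤ u i z' :=
  Set.exists_min_image _ (u i) (Set.toFinite _) (completions_nonempty i p x)

noncomputable def punishment (i : N) (p : ∀ j, j < i → A j) (x : A i) : ∀ j, A j :=
  (exists_min_completions u i p x).choose

theorem punishment_mem (i : N) (p : ∀ j, j < i → A j) (x : A i) :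
    punishment u i p x ∈ completions i p x :=
  (exists_min_completions u i p x).choose_spec.1

theorem punishment_le {i : N} {p : ∀ j, j < i → A j} {x : A i} {z : ∀ j, A j}
    (hz : z ∈ completions i p x) : u i (punishment u i p x) ≤ u i z :=
  (exists_min_completions u i p x).choose_spec.2 z hz

noncomputable def maxminAction (i : N) (p : ∀ j, j < i → A j) : A i :=
  (Finite.exists_max fun x => u i (punishment u i p x)).choose

theorem punishment_le_maxminAction (i : N) (p : ∀ j, j < i → A j) (x : A i) :
    u i (punishment u i p x) ≤ u i (punishment u i p (maxminAction u i p)) :=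
  (Finite.exists_max fun x => u i (punishment u i p x)).choose_spec x

noncomputable def maxminProfile : ∀ i, A i :=
  wellFounded_lt.fix (maxminAction u)

theorem maxminProfile_eq (i : N) :
    maxminProfile u i = maxminAction u i (fun j _ => maxminProfile u j) :=
  wellFounded_lt.fix_eq _ _

theorem punishment_le_maxminProfile (i : N) (x : A i) :
    u i (punishment u i (fun j _ => maxminProfile u j) x) ≤ u i (maxminProfile u) :=
  calc u i (punishment u i (fun j _ => maxminProfile u j) x)
      ≤ u i (punishment u i (fun j _ => maxminProfile u j) (maxminProfile u i)) := by
        rw [maxminProfile_eq u i]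
        exact punishment_le_maxminAction u i _ x
    _ ≤ u i (maxminProfile u) := punishment_le u ⟨fun _ _ => rfl, rfl⟩

noncomputable def triggerAction (j : N) (b : ∀ l, A l) : A j :=
  if h : {l | l < j ∧ b l ≠ maxminProfile u l}.Nonempty then
    let k := wellFounded_lt.min _ h
    punishment u k (fun l _ => maxminProfile u l) (b k) j
  else maxminProfile u j

theorem triggerAction_of_forall_lt_eq {j : N} {b : ∀ l, A l}
    (h : ∀ l < j, b l = maxminProfile u l) : triggerAction u j b = maxminProfile u j :=
  dif_neg fun ⟨l, hl, hne⟩ => hne (h l hl)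

theorem triggerAction_of_first_ne {j k : N} {b : ∀ l, A l} (hkj : k < j)
    (hk : b k ≠ maxminProfile u k) (hbelow : ∀ l < k, b l = maxminProfile u l) :
    triggerAction u j b = punishment u k (fun l _ => maxminProfile u l) (b k) j := by
  have hkS : k ∈ {l | l < j ∧ b l ≠ maxminProfile u l} := ⟨hkj, hk⟩
  have hmin : wellFounded_lt.min _ ⟨k, hkS⟩ = k := by
    refine le_antisymm (not_lt.1 (wellFounded_lt.not_lt_min _ hkS)) (not_lt.1 fun hlt => ?_)
    exact (wellFounded_lt.min_mem _ ⟨k, hkS⟩).2 (hbelow _ hlt)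
  rw [triggerAction, dif_pos ⟨k, hkS⟩, hmin]

theorem triggerAction_congr {j : N} {b b' : ∀ l, A l} (h : ∀ l < j, b l = b' l) :
    triggerAction u j b = triggerAction u j b' := by
  by_cases hagree : ∀ l < j, b l = maxminProfile u l
  · rw [triggerAction_of_forall_lt_eq u hagree,
      triggerAction_of_forall_lt_eq u fun l hl => (h l hl).symm.trans (hagree l hl)]
  · push Not at hagree
    obtain ⟨l, hlj, hl⟩ := hagree
    obtain ⟨k, hk, hbelow⟩ := exists_forall_lt_eq_of_ne (a := maxminProfile u) (b := b)
      fun hb => hl (congr_fun hb l)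
    have hkj : k < j := lt_of_le_of_lt (not_lt.1 fun hlk => hl (hbelow l hlk)) hlj
    rw [triggerAction_of_first_ne u hkj hk hbelow, triggerAction_of_first_ne u hkj
      (h k hkj ▸ hk) fun l hl => (h l (hl.trans hkj)).symm.trans (hbelow l hl), h k hkj]

theorem eq_punishment_of_triggerAction_eq {i : N} {b : ∀ l, A l}
    (hb : ∀ j ≠ i, triggerAction u j b = b j) (hne : b ≠ maxminProfile u) :
    b = punishment u i (fun l _ => maxminProfile u l) (b i) := by
  obtain ⟨k, hk, hbelow⟩ := exists_forall_lt_eq_of_ne hne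
  obtain rfl : k = i := by
    by_contra hki
    exact hk ((hb k hki).symm.trans (triggerAction_of_forall_lt_eq u hbelow))
  obtain ⟨hpun_below, hpun_self⟩ := punishment_mem u k (fun l _ => maxminProfile u l) (b k)
  funext j
  rcases lt_trichotomy j k with hjk | rfl | hkj
  · rw [hbelow j hjk, hpun_below j hjk]
  · exact hpun_self.symm
  · rw [← hb j hkj.ne', triggerAction_of_first_ne u hkj hk hbelow]

theorem le_maxminProfile_of_triggerAction_eq {i : N} {b : ∀ l, A l}
    (hb : ∀ j ≠ i, triggerAction u j b = b j) : u i b ≤ u i (maxminProfile u) := by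
  by_cases hne : b = maxminProfile u
  · rw [hne]
  · rw [eq_punishment_of_triggerAction_eq u hb hne]
    exact punishment_le_maxminProfile u i (b i)

noncomputable def triggerStrategy : ∀ j, (∀ l, l ≠ j → A l) → A j := fun j c =>
  triggerAction u j fun l => if h : l = j then Classical.arbitrary _ else c l h

theorem triggerStrategy_apply (j : N) (b : ∀ l, A l) :
    triggerStrategy u j (fun l _ => b l) = triggerAction u j b :=
  triggerAction_congr u fun _ hl => dif_neg hl.ne

theorem fixPt_triggerStrategy_maxminProfile : FixPt (triggerStrategy u) (maxminProfile u) :=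
  fun j => (triggerStrategy_apply u j _).trans (triggerAction_of_forall_lt_eq u fun _ _ => rfl)

theorem U_triggerStrategy (i : N) : U u (triggerStrategy u) i = u i (maxminProfile u) := by
  have hbound : ∀ b, FixPt (triggerStrategy u) b → ∀ i, u i b ≤ u i (maxminProfile u) :=
    fun b hb i => le_maxminProfile_of_triggerAction_eq u fun j _ =>
      (triggerStrategy_apply u j b).symm.trans (hb j)
  have hex : ∃ a, BestFixPt u (triggerStrategy u) a :=
    ⟨_, fixPt_triggerStrategy_maxminProfile u, hbound⟩
  rw [U, dif_pos hex]
  exact le_antisymm (hbound _ hex.choose_spec.1 i)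
    (hex.choose_spec.2 _ (fixPt_triggerStrategy_maxminProfile u) i)

end Construction

/-- every finite n-person game has a pure conditional strategy
equilibrium in its conditional extension. -/
theorem cse_exists {N : Type*} {A : N → Type*}
    [Fintype N] [DecidableEq N] [∀ i, Fintype (A i)] [∀ i, Nonempty (A i)]
    (u : N → (∀ i, A i) → ℝ) (hu : ∀ i a, 0 ≤ u i a) :
    ∃ s : ∀ i, (∀ j, j ≠ i → A j) → A i, CSE u s := by
  let : LinearOrder N := LinearOrder.lift' _ (Fintype.equivFin N).injective
  refine ⟨triggerStrategy u, fun i s' => ?_⟩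
  rw [U_triggerStrategy, U]
  split_ifs with h
  · refine le_maxminProfile_of_triggerAction_eq u fun j hj => ?_
    have hfix := h.choose_spec.1 j
    rwa [update_of_ne hj, triggerStrategy_apply] at hfix
  · exact hu i _

end CondStrat
end

section
/- In a finite two-person game, if s is a conditional strategy equilibrium, then every player receives at least their pure maximin payoff: U_i(s) ≥ max_{a_i ∈ A_i} min_{a_{-i} ∈ A_{-i}} u_i(a_i, a_{-i}) for i = 1,2. -/
namespace CondStrat2

open scoped Classical

variable {A₁ A₂ : Type*}

/-- A fixed point of the two-person conditional strategy profile `(s₁, s₂)`. -/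
def FixPt (s₁ : A₂ → A₁) (s₂ : A₁ → A₂) (a : A₁ × A₂) : Prop :=
  s₁ a.2 = a.1 ∧ s₂ a.1 = a.2

/-- `a` is a distinguished fixed point of `(s₁, s₂)`: a fixed point weakly Pareto
dominating every fixed point.  `(s₁, s₂)` is an *agreement* iff such `a` exists. -/
def BestFixPt (u₁ u₂ : A₁ × A₂ → ℝ) (s₁ : A₂ → A₁) (s₂ : A₁ → A₂) (a : A₁ × A₂) : Prop :=
  FixPt s₁ s₂ a ∧ ∀ a', FixPt s₁ s₂ a' → u₁ a' ≤ u₁ a ∧ u₂ a' ≤ u₂ a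

/-- The payoff `u` (one of `u₁`, `u₂`) evaluated at the distinguished fixed point
for agreements, and the disagreement payoff `0` otherwise. -/
noncomputable def Upay (u₁ u₂ u : A₁ × A₂ → ℝ) (s₁ : A₂ → A₁) (s₂ : A₁ → A₂) : ℝ :=
  if h : ∃ a, BestFixPt u₁ u₂ s₁ s₂ a then u h.choose else 0

/-- Conditional strategy equilibrium of the two-person conditional extension. -/
def CSE (u₁ u₂ : A₁ × A₂ → ℝ) (s₁ : A₂ → A₁) (s₂ : A₁ → A₂) : Prop :=
  (∀ s₁' : A₂ → A₁, Upay u₁ u₂ u₁ s₁' s₂ ≤ Upay u₁ u₂ u₁ s₁ s₂) ∧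
  (∀ s₂' : A₁ → A₂, Upay u₁ u₂ u₂ s₁ s₂' ≤ Upay u₁ u₂ u₂ s₁ s₂)

/-- Player 1's pure maximin payoff. -/
noncomputable def maximin₁ [Fintype A₁] [Fintype A₂] [Nonempty A₁] [Nonempty A₂]
    (u₁ : A₁ × A₂ → ℝ) : ℝ :=
  Finset.univ.sup' Finset.univ_nonempty fun a₁ =>
    Finset.univ.inf' Finset.univ_nonempty fun a₂ => u₁ (a₁, a₂)

/-- Player 2's pure maximin payoff. -/
noncomputable def maximin₂ [Fintype A₁] [Fintype A₂] [Nonempty A₁] [Nonempty A₂]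
    (u₂ : A₁ × A₂ → ℝ) : ℝ :=
  Finset.univ.sup' Finset.univ_nonempty fun a₂ =>
    Finset.univ.inf' Finset.univ_nonempty fun a₁ => u₂ (a₁, a₂)


lemma Upay_const₁ (u₁ u₂ u : A₁ × A₂ → ℝ) (b₁ : A₁) (s₂ : A₁ → A₂) :
    Upay u₁ u₂ u (fun _ => b₁) s₂ = u (b₁, s₂ b₁) := by
  have hfix : FixPt (fun _ => b₁) s₂ (b₁, s₂ b₁) := ⟨rfl, rfl⟩
  have huniq : ∀ a', FixPt (fun _ => b₁) s₂ a' → a' = (b₁, s₂ b₁) := by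
    rintro ⟨x, y⟩ ⟨h1, h2⟩
    simp only at h1 h2
    subst h1; subst h2; rfl
  have hex : ∃ a, BestFixPt u₁ u₂ (fun _ => b₁) s₂ a :=
    ⟨(b₁, s₂ b₁), hfix, fun a' ha' => by rw [huniq a' ha']; exact ⟨le_rfl, le_rfl⟩⟩
  rw [Upay, dif_pos hex, huniq _ hex.choose_spec.1]

lemma Upay_const₂ (u₁ u₂ u : A₁ × A₂ → ℝ) (s₁ : A₂ → A₁) (b₂ : A₂) :
    Upay u₁ u₂ u s₁ (fun _ => b₂) = u (s₁ b₂, b₂) := by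
  have hfix : FixPt s₁ (fun _ => b₂) (s₁ b₂, b₂) := ⟨rfl, rfl⟩
  have huniq : ∀ a', FixPt s₁ (fun _ => b₂) a' → a' = (s₁ b₂, b₂) := by
    rintro ⟨x, y⟩ ⟨h1, h2⟩
    simp only at h1 h2
    subst h2; subst h1; rfl
  have hex : ∃ a, BestFixPt u₁ u₂ s₁ (fun _ => b₂) a :=
    ⟨(s₁ b₂, b₂), hfix, fun a' ha' => by rw [huniq a' ha']; exact ⟨le_rfl, le_rfl⟩⟩
  rw [Upay, dif_pos hex, huniq _ hex.choose_spec.1]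

/-- at a conditional strategy equilibrium every player receives at
least their pure maximin payoff. -/
theorem folk_only_if [Fintype A₁] [Fintype A₂] [Nonempty A₁] [Nonempty A₂]
    (u₁ u₂ : A₁ × A₂ → ℝ) (hu₁ : ∀ a, 0 ≤ u₁ a) (hu₂ : ∀ a, 0 ≤ u₂ a)
    (s₁ : A₂ → A₁) (s₂ : A₁ → A₂) (h : CSE u₁ u₂ s₁ s₂) :
    maximin₁ u₁ ≤ Upay u₁ u₂ u₁ s₁ s₂ ∧ maximin₂ u₂ ≤ Upay u₁ u₂ u₂ s₁ s₂ := by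
  constructor
  · rw [maximin₁]
    apply Finset.sup'_le
    intro b₁ _
    calc Finset.univ.inf' Finset.univ_nonempty (fun a₂ => u₁ (b₁, a₂))
        ≤ u₁ (b₁, s₂ b₁) := Finset.inf'_le _ (Finset.mem_univ _)
      _ = Upay u₁ u₂ u₁ (fun _ => b₁) s₂ := (Upay_const₁ u₁ u₂ u₁ b₁ s₂).symm
      _ ≤ Upay u₁ u₂ u₁ s₁ s₂ := h.1 _
  · rw [maximin₂]
    apply Finset.sup'_le
    intro b₂ _
    calc Finset.univ.inf' Finset.univ_nonempty (fun a₁ => u₂ (a₁, b₂))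
        ≤ u₂ (s₁ b₂, b₂) := Finset.inf'_le _ (Finset.mem_univ _)
      _ = Upay u₁ u₂ u₂ s₁ (fun _ => b₂) := (Upay_const₂ u₁ u₂ u₂ s₁ b₂).symm
      _ ≤ Upay u₁ u₂ u₂ s₁ s₂ := h.2 _

end CondStrat2
end

section
/- (Folk theorem for conditional strategy equilibrium) In a finite two-person game, an action profile ā can be supported as the outcome (distinguished fixed point) of some conditional strategy equilibrium if and only if u_i(ā) ≥ max_{a_i} min_{a_{-i}} u_i(a_i, a_{-i}) for both players i. -/
namespace CondStrat2

open scoped Classical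

variable {A₁ A₂ : Type*}

lemma Upay₁_eq {u₁ u₂ : A₁ × A₂ → ℝ} {s₁ : A₂ → A₁} {s₂ : A₁ → A₂} {a : A₁ × A₂}
    (h : BestFixPt u₁ u₂ s₁ s₂ a) : Upay u₁ u₂ u₁ s₁ s₂ = u₁ a := by
  have he : ∃ a, BestFixPt u₁ u₂ s₁ s₂ a := ⟨a, h⟩
  have hc := he.choose_spec
  rw [Upay, dif_pos he]
  exact le_antisymm (h.2 _ hc.1).1 (hc.2 _ h.1).1

lemma Upay₂_eq {u₁ u₂ : A₁ × A₂ → ℝ} {s₁ : A₂ → A₁} {s₂ : A₁ → A₂} {a : A₁ × A₂}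
    (h : BestFixPt u₁ u₂ s₁ s₂ a) : Upay u₁ u₂ u₂ s₁ s₂ = u₂ a := by
  have he : ∃ a, BestFixPt u₁ u₂ s₁ s₂ a := ⟨a, h⟩
  have hc := he.choose_spec
  rw [Upay, dif_pos he]
  exact le_antisymm (h.2 _ hc.1).2 (hc.2 _ h.1).2

lemma Upay_le {u₁ u₂ u : A₁ × A₂ → ℝ} {s₁ : A₂ → A₁} {s₂ : A₁ → A₂} {c : ℝ}
    (hc : 0 ≤ c) (hfp : ∀ a, FixPt s₁ s₂ a → u a ≤ c) :
    Upay u₁ u₂ u s₁ s₂ ≤ c := by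
  rw [Upay]
  split
  · next h => exact hfp _ h.choose_spec.1
  · exact hc

lemma exists_min_fun [Fintype A₁] [Nonempty A₁] (f : A₁ → ℝ) :
    ∃ a, ∀ b, f a ≤ f b := by
  obtain ⟨a, -, ha⟩ := Finset.exists_min_image Finset.univ f
    ⟨Classical.arbitrary A₁, Finset.mem_univ _⟩
  exact ⟨a, fun b => ha b (Finset.mem_univ b)⟩

/-- Folk theorem: an action profile `ā` is supported as the
distinguished fixed point of some conditional strategy equilibrium iff each
player receives at least their pure maximin payoff at `ā`. -/
theorem folk [Fintype A₁] [Fintype A₂] [Nonempty A₁] [Nonempty A₂]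
    (u₁ u₂ : A₁ × A₂ → ℝ) (hu₁ : ∀ a, 0 ≤ u₁ a) (hu₂ : ∀ a, 0 ≤ u₂ a)
    (abar : A₁ × A₂) :
    (∃ (s₁ : A₂ → A₁) (s₂ : A₁ → A₂),
        CSE u₁ u₂ s₁ s₂ ∧ BestFixPt u₁ u₂ s₁ s₂ abar) ↔
      (maximin₁ u₁ ≤ u₁ abar ∧ maximin₂ u₂ ≤ u₂ abar) := by
  constructor
  · rintro ⟨s₁, s₂, hcse, hbest⟩
    constructor
    · -- deviate to constant a₁*
      obtain ⟨a₁s, ha₁s⟩ := exists_min_fun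
        (fun a₁ => -(Finset.univ.inf' Finset.univ_nonempty fun a₂ => u₁ (a₁, a₂)))
      have hmax : maximin₁ u₁ ≤ Finset.univ.inf' Finset.univ_nonempty fun a₂ => u₁ (a₁s, a₂) := by
        apply Finset.sup'_le
        intro b _
        have := ha₁s b
        linarith
      set s₁' : A₂ → A₁ := fun _ => a₁s with hs₁'
      have hfp : FixPt s₁' s₂ (a₁s, s₂ a₁s) := ⟨rfl, rfl⟩
      have huniq : ∀ a, FixPt s₁' s₂ a → a = (a₁s, s₂ a₁s) := by
        rintro ⟨a₁, a₂⟩ ⟨h1, h2⟩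
        simp only [hs₁'] at h1
        subst h1; simp at h2 ⊢; exact h2.symm
      have hb : BestFixPt u₁ u₂ s₁' s₂ (a₁s, s₂ a₁s) :=
        ⟨hfp, fun a' ha' => by rw [huniq a' ha']; exact ⟨le_refl _, le_refl _⟩⟩
      have h1 := hcse.1 s₁'
      rw [Upay₁_eq hb, Upay₁_eq hbest] at h1
      refine le_trans hmax (le_trans ?_ h1)
      exact Finset.inf'_le _ (Finset.mem_univ (s₂ a₁s))
    · obtain ⟨a₂s, ha₂s⟩ := exists_min_fun
        (fun a₂ => -(Finset.univ.inf' Finset.univ_nonempty fun a₁ => u₂ (a₁, a₂)))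
      have hmax : maximin₂ u₂ ≤ Finset.univ.inf' Finset.univ_nonempty fun a₁ => u₂ (a₁, a₂s) := by
        apply Finset.sup'_le
        intro b _
        have := ha₂s b
        linarith
      set s₂' : A₁ → A₂ := fun _ => a₂s with hs₂'
      have hfp : FixPt s₁ s₂' (s₁ a₂s, a₂s) := ⟨rfl, rfl⟩
      have huniq : ∀ a, FixPt s₁ s₂' a → a = (s₁ a₂s, a₂s) := by
        rintro ⟨a₁, a₂⟩ ⟨h1, h2⟩
        simp only [hs₂'] at h2
        subst h2; simp at h1 ⊢; exact h1.symm
      have hb : BestFixPt u₁ u₂ s₁ s₂' (s₁ a₂s, a₂s) :=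
        ⟨hfp, fun a' ha' => by rw [huniq a' ha']; exact ⟨le_refl _, le_refl _⟩⟩
      have h2 := hcse.2 s₂'
      rw [Upay₂_eq hb, Upay₂_eq hbest] at h2
      refine le_trans hmax (le_trans ?_ h2)
      exact Finset.inf'_le _ (Finset.mem_univ (s₁ a₂s))
  · rintro ⟨hm₁, hm₂⟩
    -- trigger strategies with punishments
    have hp1 : ∀ a₂ : A₂, ∃ a₁, ∀ a₁', u₂ (a₁, a₂) ≤ u₂ (a₁', a₂) := fun a₂ =>
      exists_min_fun (fun a₁ => u₂ (a₁, a₂))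
    have hp2 : ∀ a₁ : A₁, ∃ a₂, ∀ a₂', u₁ (a₁, a₂) ≤ u₁ (a₁, a₂') := fun a₁ =>
      exists_min_fun (fun a₂ => u₁ (a₁, a₂))
    choose pun₁ hpun₁ using hp1
    choose pun₂ hpun₂ using hp2
    -- punishment payoffs are at most maximin, hence at most u at abar
    have key₁ : ∀ a₁, u₁ (a₁, pun₂ a₁) ≤ u₁ abar := by
      intro a₁
      refine le_trans (le_trans (Finset.le_inf' Finset.univ_nonempty _
        fun b _ => hpun₂ a₁ b) (Finset.le_sup' (f := fun a₁ =>
          Finset.univ.inf' Finset.univ_nonempty fun a₂ => u₁ (a₁, a₂))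
          (Finset.mem_univ a₁))) hm₁
    have key₂ : ∀ a₂, u₂ (pun₁ a₂, a₂) ≤ u₂ abar := by
      intro a₂
      refine le_trans (le_trans (Finset.le_inf' Finset.univ_nonempty _
        fun b _ => hpun₁ a₂ b) (Finset.le_sup' (f := fun a₂ =>
          Finset.univ.inf' Finset.univ_nonempty fun a₁ => u₂ (a₁, a₂))
          (Finset.mem_univ a₂))) hm₂
    set s₁ : A₂ → A₁ := fun a₂ => if a₂ = abar.2 then abar.1 else pun₁ a₂ with hs₁
    set s₂ : A₁ → A₂ := fun a₁ => if a₁ = abar.1 then abar.2 else pun₂ a₁ with hs₂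
    have hfbar : FixPt s₁ s₂ abar := by
      constructor <;> simp [hs₁, hs₂]
    have hdom : ∀ a, FixPt s₁ s₂ a → u₁ a ≤ u₁ abar ∧ u₂ a ≤ u₂ abar := by
      rintro ⟨a₁, a₂⟩ ⟨h1, h2⟩
      by_cases h : a₁ = abar.1
      · subst h
        simp only [hs₂, if_pos rfl] at h2
        subst h2
        exact ⟨le_refl _, le_refl _⟩
      · simp only [hs₂, if_neg h] at h2
        have h2' : a₂ ≠ abar.2 := by
          intro he
          subst he
          simp only [hs₁, if_pos rfl] at h1
          exact h (h1.symm)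
        simp only [hs₁, if_neg h2'] at h1
        subst h1
        have hk := key₁ (pun₁ a₂)
        rw [h2] at hk
        exact ⟨hk, key₂ a₂⟩
    have hbest : BestFixPt u₁ u₂ s₁ s₂ abar := ⟨hfbar, hdom⟩
    refine ⟨s₁, s₂, ⟨?_, ?_⟩, hbest⟩
    · intro s₁'
      rw [Upay₁_eq hbest]
      refine Upay_le (hu₁ _) ?_
      rintro ⟨a₁, a₂⟩ ⟨h1, h2⟩
      by_cases h : a₁ = abar.1
      · subst h
        simp only [hs₂, if_pos rfl] at h2
        subst h2; exact le_refl _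
      · simp only [hs₂, if_neg h] at h2
        subst h2; exact key₁ a₁
    · intro s₂'
      rw [Upay₂_eq hbest]
      refine Upay_le (hu₂ _) ?_
      rintro ⟨a₁, a₂⟩ ⟨h1, h2⟩
      by_cases h : a₂ = abar.2
      · subst h
        simp only [hs₁, if_pos rfl] at h1
        subst h1; exact le_refl _
      · simp only [hs₁, if_neg h] at h1
        subst h1; exact key₂ a₂

end CondStrat2
end

section
/- Let G be a finite n-person game in which every player has at least two actions. If there is an action profile ā at which at least two distinct players i and j each receive their maximum payoff in the game (u_i(ā) = max_a u_i(a) and u_j(ā) = max_a u_j(a)), then there exists a strong conditional equilibrium in pure conditional strategies whose unique fixed point is ā. -/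
namespace CondStrat

open Function
open scoped Classical

/-- if at some action profile `ā` two distinct players each attain
their maximum payoff in the game, then there is a strong conditional equilibrium
in pure conditional strategies whose unique fixed point is `ā`. -/
theorem strongCE_exists {N : Type*} {A : N → Type*}
    [Fintype N] [DecidableEq N] [∀ k, Fintype (A k)]
    (hA : ∀ k, 1 < Fintype.card (A k))
    (u : N → (∀ k, A k) → ℝ) (hu : ∀ k a, 0 ≤ u k a)
    (i j : N) (hij : i ≠ j) (abar : ∀ k, A k)
    (hi : ∀ a, u i a ≤ u i abar) (hj : ∀ a, u j a ≤ u j abar) :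
    ∃ s : ∀ k, (∀ l, l ≠ k → A l) → A k,
      (∀ a, FixPt s a ↔ a = abar) ∧ StrongCE u s := by
  obtain ⟨bi, hbi⟩ := Fintype.exists_ne_of_one_lt_card (hA i) (abar i)
  obtain ⟨bj, hbj⟩ := Fintype.exists_ne_of_one_lt_card (hA j) (abar j)
  set si : (∀ l, l ≠ i → A l) → A i := fun a =>
    if ∀ l, ∀ hl : l ≠ i, a l hl = abar l then abar i
    else if a j (Ne.symm hij) = abar j then bi else abar i with hsi
  set sj : (∀ l, l ≠ j → A l) → A j := fun a =>
    if ∀ l, ∀ hl : l ≠ j, a l hl = abar l then abar j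
    else if a i hij = abar i then abar j else bj with hsj
  set s : ∀ k, (∀ l, l ≠ k → A l) → A k :=
    Function.update (Function.update (fun k _ => abar k) i si) j sj with hs
  have hsj' : s j = sj := Function.update_self _ _ _
  have hsi' : s i = si := by
    rw [hs, Function.update_of_ne hij, Function.update_self]
  have hsk : ∀ k, k ≠ i → k ≠ j → s k = fun _ => abar k := by
    intro k hki hkj
    rw [hs, Function.update_of_ne hkj, Function.update_of_ne hki]
  -- key: any profile agreeing with s at i and j has abar as its only fixed point
  have key : ∀ (t : ∀ k, (∀ l, l ≠ k → A l) → A k), t i = s i → t j = s j →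
      ∀ a, FixPt t a → a = abar := by
    intro t hti htj a ha
    have hai := ha i
    rw [hti, hsi', hsi] at hai
    have haj := ha j
    rw [htj, hsj', hsj] at haj
    simp only at hai haj
    by_cases hmi : ∀ l, l ≠ i → a l = abar l
    · rw [if_pos (fun l hl => hmi l hl)] at hai
      funext k
      by_cases hk : k = i
      · rw [hk, ← hai]
      · exact hmi k hk
    · rw [if_neg (fun h => hmi (fun l hl => h l hl))] at hai
      exfalso
      by_cases hmj : ∀ l, l ≠ j → a l = abar l
      · apply hmi
        intro l hl
        by_cases hlj : l = j
        · subst hlj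
          rw [← haj, if_pos (fun l hl => hmj l hl)]
        · exact hmj l hlj
      · rw [if_neg (fun h => hmj (fun l hl => h l hl))] at haj
        by_cases hcase : a j = abar j
        · rw [if_pos hcase] at hai
          rw [if_neg (by rw [← hai]; exact fun h => hbi h)] at haj
          exact hbj (haj.trans hcase)
        · rw [if_neg hcase] at hai
          rw [if_pos hai.symm] at haj
          exact hcase haj.symm
  have hfix : FixPt s abar := by
    intro k
    by_cases hk : k = i
    · subst hk
      rw [hsi', hsi]
      simp
    · by_cases hk' : k = j
      · subst hk'
        rw [hsj', hsj]
        simp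
      · rw [hsk k hk hk']
  have hbfp : BestFixPt u s abar :=
    ⟨hfix, fun a' ha' k => by rw [key s rfl rfl a' ha']⟩
  have hU : ∀ k, U u s k = u k abar := by
    intro k
    have hex : ∃ a, BestFixPt u s a := ⟨abar, hbfp⟩
    rw [U, dif_pos hex, key s rfl rfl _ hex.choose_spec.1]
  refine ⟨s, fun a => ⟨key s rfl rfl a, fun h => h ▸ hfix⟩, ?_⟩
  rintro ⟨C, s', hCne, hout, himp⟩
  have lemA : ∀ (t : ∀ k, (∀ l, l ≠ k → A l) → A k) k, (∀ a, u k a ≤ u k abar) →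
      U u t k ≤ u k abar := by
    intro t k hk
    rw [U]
    split_ifs with h
    · exact hk _
    · exact hu k abar
  by_cases hiC : i ∈ C
  · have h1 := himp i hiC
    rw [hU i] at h1
    exact absurd h1 (not_lt.mpr (lemA s' i hi))
  by_cases hjC : j ∈ C
  · have h1 := himp j hjC
    rw [hU j] at h1
    exact absurd h1 (not_lt.mpr (lemA s' j hj))
  obtain ⟨k, hk⟩ := hCne
  have h1 := himp k hk
  rw [hU k] at h1
  have h2 : U u s' k ≤ u k abar := by
    rw [U]
    split_ifs with h
    · rw [key s' (hout i hiC) (hout j hjC) _ h.choose_spec.1]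
    · exact hu k abar
  exact absurd h1 (not_lt.mpr h2)


end CondStrat
end

section
/- Under the constructed profile in the strong conditional equilibrium theorem, no coalition excluding both distinguished players can create a fixed point: if s* is a conditional strategy profile with unique fixed point ā satisfying the property that whenever s*_l(a_{-l}) = a'_l with (a'_l, a_k, a_{-kl}) ≠ ā (for l, k the two distinguished players, l ≠ k) then s*_k(a'_l, a_{-kl}) ≠ a_k, then for every nonempty coalition C ⊆ N \ {i,j} and every deviation s_C, the profile (s_C, s*_{-C}) has no fixed point other than possibly ā, and if (s_C, s*_{-C}) ≠ s* changes the outcome then it has no fixed point at all, so U_m(s_C, s*_{-C}) = 0 for all m. -/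
namespace CondStrat

open Function
open scoped Classical

/-- under the construction of the strong conditional equilibrium
theorem, no nonempty coalition excluding both distinguished players `i`, `j` can
create a fixed point other than `ā`; and if the deviation destroys `ā` as a fixed
point then the deviating profile has no fixed point at all, so everybody's
payoff is the disagreement payoff `0`. -/
theorem coalition_no_fixpoint {N : Type*} {A : N → Type*}
    [Fintype N] [DecidableEq N] [∀ k, Fintype (A k)]
    (u : N → (∀ k, A k) → ℝ)
    (i j : N) (hij : i ≠ j) (abar : ∀ k, A k)
    (s : ∀ k, (∀ l, l ≠ k → A l) → A k)
    (hfix : ∀ a, FixPt s a ↔ a = abar)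
    -- the constraint on the strategies of the two distinguished players:
    -- whenever `s l (a_{-l}) = a'_l` and the profile obtained from `a` by
    -- replacing the `l`-th coordinate with `a'_l` differs from `ā`, player `k`
    -- (the other distinguished player) does not play its coordinate back.
    (hcon : ∀ l k : N, ((l = i ∧ k = j) ∨ (l = j ∧ k = i)) →
      ∀ a : ∀ m, A m,
        Function.update a l (s l (fun m _ => a m)) ≠ abar →
        s k (fun m _ => Function.update a l (s l (fun m _ => a m)) m) ≠ a k) :
    ∀ C : Finset N, C.Nonempty → i ∉ C → j ∉ C →
      ∀ s' : ∀ k, (∀ l, l ≠ k → A l) → A k, (∀ m ∉ C, s' m = s m) →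
        (∀ a, FixPt s' a → a = abar) ∧
        (¬ FixPt s' abar → (¬ ∃ a, FixPt s' a) ∧ ∀ m, U u s' m = 0) := by
  intro C hC hiC hjC s' hs'
  have hi' : s' i = s i := hs' i hiC
  have hj' : s' j = s j := hs' j hjC
  have key : ∀ a, FixPt s' a → a = abar := by
    intro a ha
    by_contra hne
    have hai : s i (fun m _ => a m) = a i := by
      have := ha i; rwa [hi'] at this
    have hupd : Function.update a i (s i (fun m _ => a m)) = a := by
      rw [hai, Function.update_eq_self]
    have h := hcon i j (Or.inl ⟨rfl, rfl⟩) a (by rw [hupd]; exact hne)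
    apply h
    have hj := ha j; rw [hj'] at hj
    calc s j (fun m _ => Function.update a i (s i fun m _ => a m) m)
        = s j (fun m _ => a m) := by rw [hupd]
      _ = a j := hj
  refine ⟨key, fun hnf => ?_⟩
  have hno : ¬ ∃ a, FixPt s' a := by
    rintro ⟨a, ha⟩; exact hnf (key a ha ▸ ha)
  refine ⟨hno, fun m => ?_⟩
  rw [U, dif_neg]
  rintro ⟨a, ha, _⟩
  exact hno ⟨a, ha⟩

end CondStrat
end

section
/- In a finite n-person game with n ≥ 4 where each player has at least two actions, every action profile ā can be supported as the unique fixed point of some conditional strategy profile s with the property that no single player can unilaterally deviate to create a profile admitting a fixed point different from ā; consequently ā is the outcome of a conditional strategy equilibrium. -/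
namespace CondStrat

open Function
open scoped Classical

/-!
Fix a permutation `σ` of the players without cycles of length at most three (a rotation of
the `n ≥ 4` players) and, for every player, an action `b i ≠ ā i`. Under `triggerProfile σ ā b`,
player `j` plays `b j` exactly when the set `D` of the other players deviating from `ā` is `{t}`
with `j = σ t`, or `{t, σ t}` with `j = σ (σ t)`, and plays `ā j` otherwise. A fixed point with
nonempty deviation set `d` needs every rule to be consistent with `d`, yet each nonempty `d` has
two players whose rules are not: `t, σ t` for `d = {t}`; `t, σ² t` for `d = {t, σ t}`; `t, σ t`
for `d = {t, σ t, σ² t}`; any two members of `d` otherwise. A single deviator repairs at most one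
of them, so no unilateral deviation yields a fixed point other than `ā`, and none is profitable.
-/

theorem exists_injective_no_short_cycles {N : Type*} [Fintype N] (hN : 4 ≤ Fintype.card N) :
    ∃ σ : N → N, Injective σ ∧ (∀ c, σ c ≠ c) ∧ (∀ c, σ (σ c) ≠ c) ∧ (∀ c, σ (σ (σ c)) ≠ c) := by
  obtain ⟨m, hm⟩ := Nat.exists_eq_add_of_le' hN
  let e : Fin (m + 4) ≃ N := (Fintype.equivFinOfCardEq hm).symm
  refine ⟨e.permCongr (finRotate _), Equiv.injective _, ?_, ?_, ?_⟩ <;> intro c <;>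
    simp [Equiv.permCongr_apply, ← e.eq_symm_apply, finRotate_apply, add_assoc, Fin.ext_iff,
      Fin.val_add, Nat.mod_eq_of_lt]

theorem pair_eq_singleton_iff {α : Type*} {a b c : α} : ({a, b} : Set α) = {c} ↔ a = c ∧ b = c := by
  refine ⟨fun h => ⟨h.subset (Set.mem_insert a _), h.subset (Set.mem_insert_of_mem a rfl)⟩, ?_⟩
  rintro ⟨rfl, rfl⟩
  exact Set.pair_eq_singleton _

section Triggers
variable {N : Type*} (σ : N → N)

def Triggers (D : Set N) (j : N) : Prop :=
  (∃ t, D = {t} ∧ j = σ t) ∨ (∃ t, D = {t, σ t} ∧ j = σ (σ t))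

def IsViolator (d : Set N) (j : N) : Prop :=
  ¬ (j ∈ d ↔ Triggers σ (d \ {j}) j)

variable {σ}

theorem not_triggers_empty (j : N) : ¬ Triggers σ ∅ j := by
  rintro (⟨t, ht, -⟩ | ⟨t, ht, -⟩)
  · exact (Set.singleton_nonempty t).ne_empty ht.symm
  · exact (Set.insert_nonempty t _).ne_empty ht.symm

theorem triggers_singleton_iff (h1 : ∀ c, σ c ≠ c) {s j : N} : Triggers σ {s} j ↔ j = σ s := by
  simp only [Triggers, Set.singleton_eq_singleton_iff, eq_comm (a := ({s} : Set N)),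
    pair_eq_singleton_iff]
  grind

theorem triggers_pair_iff {x y j : N} (hxy : x ≠ y) :
    Triggers σ {x, y} j ↔ (y = σ x ∧ j = σ y) ∨ (x = σ y ∧ j = σ x) := by
  simp only [Triggers, Set.pair_eq_pair_iff, pair_eq_singleton_iff]
  grind

theorem isViolator_singleton (h1 : ∀ c, σ c ≠ c) (t : N) :
    IsViolator σ {t} t ∧ IsViolator σ {t} (σ t) := by
  simp [IsViolator, not_triggers_empty, triggers_singleton_iff h1, h1]

theorem isViolator_pair (hσ : Injective σ) (h1 : ∀ c, σ c ≠ c) (h2 : ∀ c, σ (σ c) ≠ c) (t : N) :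
    IsViolator σ {t, σ t} t ∧ IsViolator σ {t, σ t} (σ (σ t)) := by
  have h1' : σ (σ t) ≠ σ t := hσ.ne (h1 t)
  have hd₁ : ({t, σ t} : Set N) \ {t} = {σ t} := by
    ext; simp only [Set.mem_sdiff, Set.mem_insert_iff, Set.mem_singleton_iff]; grind
  have hd₂ : ({t, σ t} : Set N) \ {σ (σ t)} = {t, σ t} := by
    ext; simp only [Set.mem_sdiff, Set.mem_insert_iff, Set.mem_singleton_iff]; grind
  simp only [IsViolator, hd₁, hd₂, triggers_singleton_iff h1, triggers_pair_iff (h1 t).symm]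
  grind

theorem isViolator_triple (hσ : Injective σ) (h1 : ∀ c, σ c ≠ c) (h2 : ∀ c, σ (σ c) ≠ c)
    (h3 : ∀ c, σ (σ (σ c)) ≠ c) (t : N) :
    IsViolator σ {t, σ t, σ (σ t)} t ∧ IsViolator σ {t, σ t, σ (σ t)} (σ t) := by
  have h1' : σ (σ t) ≠ σ t := hσ.ne (h1 t)
  have h2' : σ (σ (σ t)) ≠ σ t := hσ.ne (h2 t)
  have hd₁ : ({t, σ t, σ (σ t)} : Set N) \ {t} = {σ t, σ (σ t)} := by
    ext; simp only [Set.mem_sdiff, Set.mem_insert_iff, Set.mem_singleton_iff]; grind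
  have hd₂ : ({t, σ t, σ (σ t)} : Set N) \ {σ t} = {t, σ (σ t)} := by
    ext; simp only [Set.mem_sdiff, Set.mem_insert_iff, Set.mem_singleton_iff]; grind
  simp only [IsViolator, hd₁, hd₂, triggers_pair_iff h1'.symm, triggers_pair_iff (h2 t).symm]
  grind

theorem exists_two_isViolator (hσ : Injective σ) (h1 : ∀ c, σ c ≠ c) (h2 : ∀ c, σ (σ c) ≠ c)
    (h3 : ∀ c, σ (σ (σ c)) ≠ c) {d : Set N} (hd : d.Nonempty) :
    ∃ j₁ j₂, j₁ ≠ j₂ ∧ IsViolator σ d j₁ ∧ IsViolator σ d j₂ := by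
  obtain ⟨t, ht⟩ := hd
  by_cases hsingle : d = {t}
  · exact hsingle ▸ ⟨t, σ t, (h1 t).symm, isViolator_singleton h1 t⟩
  by_cases htrig : ∃ x ∈ d, Triggers σ (d \ {x}) x
  · obtain ⟨x, hx, ⟨c, hc, rfl⟩ | ⟨c, hc, rfl⟩⟩ := htrig
    · obtain rfl : d = {c, σ c} := by
        rw [← Set.insert_sdiff_self_of_mem hx, hc, Set.pair_comm]
      exact ⟨c, σ (σ c), (h2 c).symm, isViolator_pair hσ h1 h2 c⟩
    · obtain rfl : d = {c, σ c, σ (σ c)} := by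
        rw [← Set.insert_sdiff_self_of_mem hx, hc, Set.insert_comm, Set.pair_comm]
      exact ⟨c, σ c, (h1 c).symm, isViolator_triple hσ h1 h2 h3 c⟩
  · obtain ⟨y, hy, hyt⟩ : ∃ y ∈ d, y ≠ t := by
      by_contra! h
      exact hsingle (Set.eq_singleton_iff_unique_mem.mpr ⟨ht, h⟩)
    have hviol : ∀ x ∈ d, IsViolator σ d x := fun x hx h => htrig ⟨x, hx, h.mp hx⟩
    exact ⟨t, y, hyt.symm, hviol t ht, hviol y hy⟩

end Triggers

section GameTheory
variable {N : Type*} {A : N → Type*} {u : N → (∀ i, A i) → ℝ}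
  {s : ∀ i, (∀ j, j ≠ i → A j) → A i} {a : ∀ i, A i}

theorem bestFixPt_of_forall_fixPt_eq (ha : FixPt s a) (h : ∀ a', FixPt s a' → a' = a) :
    BestFixPt u s a :=
  ⟨ha, fun a' ha' i => by rw [h a' ha']⟩

theorem BestFixPt.U_eq (h : BestFixPt u s a) (i : N) : U u s i = u i a := by
  have hex : ∃ a, BestFixPt u s a := ⟨a, h⟩
  rw [U, dif_pos hex]
  exact le_antisymm (h.2 _ hex.choose_spec.1 i) (hex.choose_spec.2 _ h.1 i)

theorem U_le_of_forall_fixPt_eq {i : N} (h : ∀ a', FixPt s a' → a' = a) (hu : 0 ≤ u i a) :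
    U u s i ≤ u i a := by
  unfold U
  split_ifs with hex
  · rw [h _ hex.choose_spec.1]
  · exact hu

theorem cse_of_forall_fixPt_update_eq [DecidableEq N] (hu : ∀ i, 0 ≤ u i a)
    (hs : BestFixPt u s a) (h : ∀ i s' a', FixPt (update s i s') a' → a' = a) : CSE u s :=
  fun i s' => (hs.U_eq i).symm ▸ U_le_of_forall_fixPt_eq (h i s') (hu i)

end GameTheory

section TriggerProfile
variable {N : Type*} {A : N → Type*} {σ : N → N} {abar b : ∀ i, A i}

noncomputable def triggerProfile (σ : N → N) (abar b : ∀ i, A i) :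
    ∀ i, (∀ j, j ≠ i → A j) → A i :=
  fun i x => if Triggers σ {k | ∃ hk : k ≠ i, x k hk ≠ abar k} i then b i else abar i

theorem triggerProfile_apply (i : N) (a : ∀ i, A i) :
    triggerProfile σ abar b i (fun k _ => a k) =
      if Triggers σ ({k | a k ≠ abar k} \ {i}) i then b i else abar i := by
  have hD : {k | ∃ _ : k ≠ i, a k ≠ abar k} = {k | a k ≠ abar k} \ {i} := by
    ext k
    simp only [Set.mem_ofPred_eq, Set.mem_sdiff, Set.mem_singleton_iff, exists_prop, and_comm]
  rw [triggerProfile, hD]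

theorem fixPt_triggerProfile : FixPt (triggerProfile σ abar b) abar := by
  intro i
  simp [triggerProfile_apply, not_triggers_empty]

theorem triggerProfile_ne_of_isViolator (hb : ∀ i, b i ≠ abar i) {a : ∀ i, A i} {j : N}
    (hj : IsViolator σ {k | a k ≠ abar k} j) :
    triggerProfile σ abar b j (fun k _ => a k) ≠ a j := by
  rw [triggerProfile_apply]
  split_ifs with htrig
  · intro hbj
    exact hj ⟨fun _ => htrig, fun _ => show a j ≠ abar j from hbj ▸ hb j⟩
  · intro habar
    exact hj ⟨fun hne => absurd habar.symm hne, fun h => absurd h htrig⟩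

theorem eq_of_fixPt_update_triggerProfile [DecidableEq N] (hσ : Injective σ)
    (h1 : ∀ c, σ c ≠ c) (h2 : ∀ c, σ (σ c) ≠ c) (h3 : ∀ c, σ (σ (σ c)) ≠ c)
    (hb : ∀ i, b i ≠ abar i) {i : N} {s' : (∀ j, j ≠ i → A j) → A i} {a : ∀ i, A i}
    (ha : FixPt (update (triggerProfile σ abar b) i s') a) : a = abar := by
  by_contra hne
  obtain ⟨j₁, j₂, hj₁₂, hv₁, hv₂⟩ := exists_two_isViolator hσ h1 h2 h3 (ne_iff.mp hne)
  obtain ⟨j, hji, hj⟩ : ∃ j ≠ i, IsViolator σ {k | a k ≠ abar k} j := by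
    by_cases h : j₁ = i
    · exact ⟨j₂, h ▸ hj₁₂.symm, hv₂⟩
    · exact ⟨j₁, h, hv₁⟩
  have haj := ha j
  rw [update_of_ne hji] at haj
  exact triggerProfile_ne_of_isViolator hb hj haj

end TriggerProfile

/-- in a finite game with at least four players, each having at
least two actions, every action profile `ā` is the unique fixed point of some
conditional strategy profile from which no unilateral deviation can create a
fixed point different from `ā`; consequently `ā` is the outcome of a conditional
strategy equilibrium. -/
theorem every_profile_supported {N : Type*} {A : N → Type*}
    [Fintype N] [DecidableEq N] [∀ i, Fintype (A i)]
    (hN : 4 ≤ Fintype.card N) (hA : ∀ i, 1 < Fintype.card (A i))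
    (u : N → (∀ i, A i) → ℝ) (hu : ∀ i a, 0 ≤ u i a)
    (abar : ∀ i, A i) :
    ∃ s : ∀ i, (∀ j, j ≠ i → A j) → A i,
      (∀ a, FixPt s a ↔ a = abar) ∧
      (∀ (i : N) (s' : (∀ j, j ≠ i → A j) → A i) (a : ∀ k, A k),
        FixPt (Function.update s i s') a → a = abar) ∧
      CSE u s ∧ BestFixPt u s abar := by
  obtain ⟨σ, hσ, h1, h2, h3⟩ := exists_injective_no_short_cycles hN
  choose b hb using fun i => Fintype.exists_ne_of_one_lt_card (hA i) (abar i)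
  have hdev : ∀ i s' a, FixPt (update (triggerProfile σ abar b) i s') a → a = abar :=
    fun _ _ _ => eq_of_fixPt_update_triggerProfile hσ h1 h2 h3 hb
  obtain ⟨i₀⟩ : Nonempty N := Fintype.card_pos_iff.mp (by omega)
  have huniq : ∀ a, FixPt (triggerProfile σ abar b) a → a = abar :=
    fun a ha => hdev i₀ _ a (by rwa [update_eq_self])
  have hbest : BestFixPt u (triggerProfile σ abar b) abar :=
    bestFixPt_of_forall_fixPt_eq fixPt_triggerProfile huniq
  exact ⟨triggerProfile σ abar b, fun a => ⟨huniq a, fun h => h ▸ fixPt_triggerProfile⟩, hdev,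
    cse_of_forall_fixPt_update_eq (fun i => hu i abar) hbest hdev, hbest⟩

end CondStrat
end

section
/- Every finite two-person game has a conditional strategy equilibrium in pure conditional strategies under the generalized (averaging) outcome function: there exists s* = (s*_1, s*_2) such that U_i(s*) ≥ U_i(s'_i, s*_{-i}) for all i and all conditional strategies s'_i, where disagreement payoffs are given by averaging over the disagreement set D(s). -/
namespace CondStrat2

open scoped Classical

variable {A₁ A₂ : Type*}

/-- The disagreement set `D(s)`: if `s` has no fixed point it is the set of
profiles `(s_i(a_{-i}), a_{-i})` over both players `i` and all `a_{-i}`;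
otherwise it is the set of fixed points of `s`. -/
noncomputable def DSet [Fintype A₁] [Fintype A₂] [DecidableEq A₁] [DecidableEq A₂]
    (s₁ : A₂ → A₁) (s₂ : A₁ → A₂) : Finset (A₁ × A₂) :=
  if ∃ a, FixPt s₁ s₂ a then Finset.univ.filter (FixPt s₁ s₂)
  else (Finset.univ.image fun a₂ => (s₁ a₂, a₂)) ∪
    (Finset.univ.image fun a₁ => (a₁, s₂ a₁))

/-- The generalized (averaging) outcome function: the payoff at the
distinguished fixed point for agreements, and the average of the payoffs over
the disagreement set `D(s)` otherwise. -/
noncomputable def Ugen [Fintype A₁] [Fintype A₂] [DecidableEq A₁] [DecidableEq A₂]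
    (u₁ u₂ u : A₁ × A₂ → ℝ) (s₁ : A₂ → A₁) (s₂ : A₁ → A₂) : ℝ :=
  if h : ∃ a, BestFixPt u₁ u₂ s₁ s₂ a then u h.choose
  else (∑ a ∈ DSet s₁ s₂, u a) / (DSet s₁ s₂).card

section Aux

variable [Fintype A₁] [Fintype A₂] [DecidableEq A₁] [DecidableEq A₂]

/-- If the profile has a unique fixed point, `Ugen` is the payoff there. -/
lemma ugen_of_unique_fixPt {u₁ u₂ u : A₁ × A₂ → ℝ} {s₁ : A₂ → A₁} {s₂ : A₁ → A₂}
    {astar : A₁ × A₂} (hastar : FixPt s₁ s₂ astar)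
    (huniq : ∀ a, FixPt s₁ s₂ a → a = astar) :
    Ugen u₁ u₂ u s₁ s₂ = u astar := by
  have hbest : ∃ a, BestFixPt u₁ u₂ s₁ s₂ a :=
    ⟨astar, hastar, fun a' ha' => by rw [huniq a' ha']; exact ⟨le_rfl, le_rfl⟩⟩
  unfold Ugen
  rw [dif_pos hbest, huniq _ hbest.choose_spec.1]

lemma dset_nofix {s₁ : A₂ → A₁} {s₂ : A₁ → A₂} (hnofix : ¬ ∃ a, FixPt s₁ s₂ a) :
    DSet s₁ s₂ = (Finset.univ.image fun a₂ => (s₁ a₂, a₂)) ∪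
      (Finset.univ.image fun a₁ => (a₁, s₂ a₁)) := by
  unfold DSet; rw [if_neg hnofix]

lemma dset_disjoint {s₁ : A₂ → A₁} {s₂ : A₁ → A₂} (hnofix : ¬ ∃ a, FixPt s₁ s₂ a) :
    Disjoint (Finset.univ.image fun a₂ : A₂ => (s₁ a₂, a₂))
      (Finset.univ.image fun a₁ : A₁ => (a₁, s₂ a₁)) := by
  rw [Finset.disjoint_left]
  rintro a ha hb
  simp only [Finset.mem_image, Finset.mem_univ, true_and] at ha hb
  obtain ⟨c, rfl⟩ := ha
  obtain ⟨b, hb⟩ := hb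
  have hb1 : b = s₁ c := congrArg Prod.fst hb
  have hb2 : s₂ b = c := congrArg Prod.snd hb
  exact hnofix ⟨(s₁ c, c), rfl, by rw [← hb1]; exact hb2⟩

lemma sum_dset_nofix {s₁ : A₂ → A₁} {s₂ : A₁ → A₂} (hnofix : ¬ ∃ a, FixPt s₁ s₂ a)
    (u : A₁ × A₂ → ℝ) :
    ∑ a ∈ DSet s₁ s₂, u a = (∑ c, u (s₁ c, c)) + (∑ b, u (b, s₂ b)) := by
  rw [dset_nofix hnofix, Finset.sum_union (dset_disjoint hnofix)]
  rw [Finset.sum_image (by intro c _ c' _ h; exact (Prod.ext_iff.mp h).2)]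
  rw [Finset.sum_image (by intro b _ b' _ h; exact (Prod.ext_iff.mp h).1)]

lemma card_dset_nofix {s₁ : A₂ → A₁} {s₂ : A₁ → A₂} (hnofix : ¬ ∃ a, FixPt s₁ s₂ a) :
    (DSet s₁ s₂).card = Fintype.card A₂ + Fintype.card A₁ := by
  rw [dset_nofix hnofix, Finset.card_union_of_disjoint (dset_disjoint hnofix)]
  rw [Finset.card_image_of_injective _ (fun c c' h => (Prod.ext_iff.mp h).2)]
  rw [Finset.card_image_of_injective _ (fun b b' h => (Prod.ext_iff.mp h).1)]
  rw [Finset.card_univ, Finset.card_univ]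

lemma ugen_nofix {u₁ u₂ u : A₁ × A₂ → ℝ} {s₁ : A₂ → A₁} {s₂ : A₁ → A₂}
    (hnofix : ¬ ∃ a, FixPt s₁ s₂ a) :
    Ugen u₁ u₂ u s₁ s₂ =
      ((∑ c, u (s₁ c, c)) + (∑ b, u (b, s₂ b))) /
        ((Fintype.card A₂ : ℝ) + (Fintype.card A₁ : ℝ)) := by
  have hnb : ¬ ∃ a, BestFixPt u₁ u₂ s₁ s₂ a := fun ⟨a, ha⟩ => hnofix ⟨a, ha.1⟩
  unfold Ugen
  rw [dif_neg hnb, sum_dset_nofix hnofix, card_dset_nofix hnofix]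
  push_cast
  ring

lemma Ncard_pos [Nonempty A₁] [Nonempty A₂] :
    (0 : ℝ) < (Fintype.card A₂ : ℝ) + (Fintype.card A₁ : ℝ) := by
  have h1 : 0 < Fintype.card A₁ := Fintype.card_pos
  have h2 : 0 < Fintype.card A₂ := Fintype.card_pos
  have : (0 : ℕ) < Fintype.card A₂ + Fintype.card A₁ := Nat.add_pos_left h2 _
  exact_mod_cast this

/-- Bound on all deviations of player 1 against a fixed strategy `y` of player 2. -/
lemma dev1_bound [Nonempty A₁] [Nonempty A₂] {u₁ u₂ : A₁ × A₂ → ℝ} {y : A₁ → A₂} {B : ℝ}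
    (h1 : ∀ b, u₁ (b, y b) ≤ B)
    (h2 : ∀ s₁' : A₂ → A₁, (¬ ∃ a, FixPt s₁' y a) →
      (∑ c, u₁ (s₁' c, c)) + (∑ b, u₁ (b, y b)) ≤
        ((Fintype.card A₂ : ℝ) + (Fintype.card A₁ : ℝ)) * B)
    (s₁' : A₂ → A₁) : Ugen u₁ u₂ u₁ s₁' y ≤ B := by
  have hfixle : ∀ a, FixPt s₁' y a → u₁ a ≤ B := by
    rintro ⟨b, c⟩ ⟨hf1, hf2⟩
    simp only at hf2
    subst hf2
    exact h1 b
  by_cases hfp : ∃ a, FixPt s₁' y a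
  · unfold Ugen
    split_ifs with hb
    · exact hfixle _ hb.choose_spec.1
    · have hS : DSet s₁' y = Finset.univ.filter (FixPt s₁' y) := by
        unfold DSet; rw [if_pos hfp]
      have hmem : hfp.choose ∈ DSet s₁' y := by
        rw [hS]; exact Finset.mem_filter.mpr ⟨Finset.mem_univ _, hfp.choose_spec⟩
      have hcard : (0 : ℝ) < ((DSet s₁' y).card : ℝ) := by
        exact_mod_cast Finset.card_pos.mpr ⟨_, hmem⟩
      rw [div_le_iff₀ hcard]
      calc ∑ a ∈ DSet s₁' y, u₁ a ≤ ∑ _a ∈ DSet s₁' y, B := by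
            refine Finset.sum_le_sum fun a ha => hfixle a ?_
            rw [hS] at ha
            exact (Finset.mem_filter.mp ha).2
        _ = ((DSet s₁' y).card : ℝ) * B := by rw [Finset.sum_const, nsmul_eq_mul]
        _ = B * ((DSet s₁' y).card : ℝ) := mul_comm _ _
  · rw [ugen_nofix hfp, div_le_iff₀ Ncard_pos]
    exact (h2 s₁' hfp).trans (le_of_eq (mul_comm _ _))

/-- Bound on all deviations of player 2 against a fixed strategy `x` of player 1. -/
lemma dev2_bound [Nonempty A₁] [Nonempty A₂] {u₁ u₂ : A₁ × A₂ → ℝ} {x : A₂ → A₁} {B : ℝ}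
    (h1 : ∀ c, u₂ (x c, c) ≤ B)
    (h2 : ∀ s₂' : A₁ → A₂, (¬ ∃ a, FixPt x s₂' a) →
      (∑ c, u₂ (x c, c)) + (∑ b, u₂ (b, s₂' b)) ≤
        ((Fintype.card A₂ : ℝ) + (Fintype.card A₁ : ℝ)) * B)
    (s₂' : A₁ → A₂) : Ugen u₁ u₂ u₂ x s₂' ≤ B := by
  have hfixle : ∀ a, FixPt x s₂' a → u₂ a ≤ B := by
    rintro ⟨b, c⟩ ⟨hf1, hf2⟩
    simp only at hf1
    subst hf1
    exact h1 c
  by_cases hfp : ∃ a, FixPt x s₂' a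
  · unfold Ugen
    split_ifs with hb
    · exact hfixle _ hb.choose_spec.1
    · have hS : DSet x s₂' = Finset.univ.filter (FixPt x s₂') := by
        unfold DSet; rw [if_pos hfp]
      have hmem : hfp.choose ∈ DSet x s₂' := by
        rw [hS]; exact Finset.mem_filter.mpr ⟨Finset.mem_univ _, hfp.choose_spec⟩
      have hcard : (0 : ℝ) < ((DSet x s₂').card : ℝ) := by
        exact_mod_cast Finset.card_pos.mpr ⟨_, hmem⟩
      rw [div_le_iff₀ hcard]
      calc ∑ a ∈ DSet x s₂', u₂ a ≤ ∑ _a ∈ DSet x s₂', B := by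
            refine Finset.sum_le_sum fun a ha => hfixle a ?_
            rw [hS] at ha
            exact (Finset.mem_filter.mp ha).2
        _ = ((DSet x s₂').card : ℝ) * B := by rw [Finset.sum_const, nsmul_eq_mul]
        _ = B * ((DSet x s₂').card : ℝ) := mul_comm _ _
  · rw [ugen_nofix hfp, div_le_iff₀ Ncard_pos]
    exact (h2 s₂' hfp).trans (le_of_eq (mul_comm _ _))

end Aux

/-- every finite two-person game has a pure conditional strategy
equilibrium under the generalized (averaging) outcome function. -/
theorem general_existence [Fintype A₁] [Fintype A₂] [Nonempty A₁] [Nonempty A₂]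
    [DecidableEq A₁] [DecidableEq A₂]
    (u₁ u₂ : A₁ × A₂ → ℝ) (hu₁ : ∀ a, 0 ≤ u₁ a) (hu₂ : ∀ a, 0 ≤ u₂ a) :
    ∃ (s₁ : A₂ → A₁) (s₂ : A₁ → A₂),
      (∀ s₁' : A₂ → A₁, Ugen u₁ u₂ u₁ s₁' s₂ ≤ Ugen u₁ u₂ u₁ s₁ s₂) ∧
      (∀ s₂' : A₁ → A₂, Ugen u₁ u₂ u₂ s₁ s₂' ≤ Ugen u₁ u₂ u₂ s₁ s₂) := by
  classical
  -- greedy selections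
  have hx' : ∀ c : A₂, ∃ b : A₁, ∀ b' : A₁, u₁ (b', c) ≤ u₁ (b, c) := fun c =>
    Finite.exists_max fun b => u₁ (b, c)
  choose x hx using hx'
  have hy' : ∀ b : A₁, ∃ c : A₂, ∀ c' : A₂, u₂ (b, c') ≤ u₂ (b, c) := fun b =>
    Finite.exists_max fun c => u₂ (b, c)
  choose y hy using hy'
  by_cases hfix : ∃ a, FixPt x y a
  · -- the fixed point of the greedy pair is a pure Nash point; use constants
    obtain ⟨⟨b₀, c₀⟩, hb₀, hc₀⟩ := hfix
    simp only at hb₀ hc₀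
    refine ⟨fun _ => b₀, fun _ => c₀, ?_, ?_⟩
    · intro s₁'
      have huniq : ∀ a, FixPt (fun _ => b₀) (fun _ => c₀) a → a = (b₀, c₀) := by
        rintro ⟨b, c⟩ ⟨hf1, hf2⟩
        simp only at hf1 hf2
        rw [← hf1, ← hf2]
      have heq : Ugen u₁ u₂ u₁ (fun _ => b₀) (fun _ => c₀) = u₁ (b₀, c₀) :=
        ugen_of_unique_fixPt ⟨rfl, rfl⟩ huniq
      have huniq' : ∀ a, FixPt s₁' (fun _ => c₀) a → a = (s₁' c₀, c₀) := by
        rintro ⟨b, c⟩ ⟨hf1, hf2⟩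
        simp only at hf1 hf2
        rw [← hf2] at hf1 ⊢
        rw [← hf1]
      have hdev : Ugen u₁ u₂ u₁ s₁' (fun _ => c₀) = u₁ (s₁' c₀, c₀) :=
        ugen_of_unique_fixPt ⟨rfl, rfl⟩ huniq'
      rw [heq, hdev]
      have := hx c₀ (s₁' c₀)
      rwa [hb₀] at this
    · intro s₂'
      have huniq : ∀ a, FixPt (fun _ => b₀) (fun _ => c₀) a → a = (b₀, c₀) := by
        rintro ⟨b, c⟩ ⟨hf1, hf2⟩
        simp only at hf1 hf2
        rw [← hf1, ← hf2]
      have heq : Ugen u₁ u₂ u₂ (fun _ => b₀) (fun _ => c₀) = u₂ (b₀, c₀) :=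
        ugen_of_unique_fixPt ⟨rfl, rfl⟩ huniq
      have huniq' : ∀ a, FixPt (fun _ => b₀) s₂' a → a = (b₀, s₂' b₀) := by
        rintro ⟨b, c⟩ ⟨hf1, hf2⟩
        simp only at hf1 hf2
        rw [← hf1] at hf2 ⊢
        rw [← hf2]
      have hdev : Ugen u₁ u₂ u₂ (fun _ => b₀) s₂' = u₂ (b₀, s₂' b₀) :=
        ugen_of_unique_fixPt ⟨rfl, rfl⟩ huniq'
      rw [heq, hdev]
      have := hy b₀ (s₂' b₀)
      rwa [hc₀] at this
  · -- greedy pair has no fixed point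
    obtain ⟨bm, hbm⟩ : ∃ b, ∀ b', u₁ (b', y b') ≤ u₁ (b, y b) :=
      Finite.exists_max fun b => u₁ (b, y b)
    obtain ⟨cm, hcm⟩ : ∃ c, ∀ c', u₂ (x c', c') ≤ u₂ (x c, c) :=
      Finite.exists_max fun c => u₂ (x c, c)
    by_cases h2a :
        (∑ c, u₁ (x c, c)) + (∑ b, u₁ (b, y b)) <
          ((Fintype.card A₂ : ℝ) + (Fintype.card A₁ : ℝ)) * u₁ (bm, y bm)
    · -- player 1 grabs the best point on `y`'s graph
      refine ⟨fun _ => bm, y, ?_, ?_⟩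
      · intro s₁'
        have huniq : ∀ a, FixPt (fun _ => bm) y a → a = (bm, y bm) := by
          rintro ⟨b, c⟩ ⟨hf1, hf2⟩
          simp only at hf1 hf2
          rw [← hf1] at hf2 ⊢
          rw [← hf2]
        have heq : Ugen u₁ u₂ u₁ (fun _ => bm) y = u₁ (bm, y bm) :=
          ugen_of_unique_fixPt ⟨rfl, rfl⟩ huniq
        rw [heq]
        refine dev1_bound hbm (fun t _ => ?_) s₁'
        have hsum : (∑ c, u₁ (t c, c)) ≤ ∑ c, u₁ (x c, c) :=
          Finset.sum_le_sum fun c _ => hx c (t c)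
        linarith [h2a.le]
      · intro s₂'
        have huniq : ∀ a, FixPt (fun _ => bm) y a → a = (bm, y bm) := by
          rintro ⟨b, c⟩ ⟨hf1, hf2⟩
          simp only at hf1 hf2
          rw [← hf1] at hf2 ⊢
          rw [← hf2]
        have heq : Ugen u₁ u₂ u₂ (fun _ => bm) y = u₂ (bm, y bm) :=
          ugen_of_unique_fixPt ⟨rfl, rfl⟩ huniq
        have huniq' : ∀ a, FixPt (fun _ => bm) s₂' a → a = (bm, s₂' bm) := by
          rintro ⟨b, c⟩ ⟨hf1, hf2⟩
          simp only at hf1 hf2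
          rw [← hf1] at hf2 ⊢
          rw [← hf2]
        have hdev : Ugen u₁ u₂ u₂ (fun _ => bm) s₂' = u₂ (bm, s₂' bm) :=
          ugen_of_unique_fixPt ⟨rfl, rfl⟩ huniq'
        rw [heq, hdev]
        exact hy bm (s₂' bm)
    · by_cases h2b :
          (∑ c, u₂ (x c, c)) + (∑ b, u₂ (b, y b)) <
            ((Fintype.card A₂ : ℝ) + (Fintype.card A₁ : ℝ)) * u₂ (x cm, cm)
      · -- player 2 grabs the best point on `x`'s graph
        refine ⟨x, fun _ => cm, ?_, ?_⟩
        · intro s₁'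
          have huniq : ∀ a, FixPt x (fun _ => cm) a → a = (x cm, cm) := by
            rintro ⟨b, c⟩ ⟨hf1, hf2⟩
            simp only at hf1 hf2
            rw [← hf2] at hf1 ⊢
            rw [← hf1]
          have heq : Ugen u₁ u₂ u₁ x (fun _ => cm) = u₁ (x cm, cm) :=
            ugen_of_unique_fixPt ⟨rfl, rfl⟩ huniq
          have huniq' : ∀ a, FixPt s₁' (fun _ => cm) a → a = (s₁' cm, cm) := by
            rintro ⟨b, c⟩ ⟨hf1, hf2⟩
            simp only at hf1 hf2
            rw [← hf2] at hf1 ⊢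
            rw [← hf1]
          have hdev : Ugen u₁ u₂ u₁ s₁' (fun _ => cm) = u₁ (s₁' cm, cm) :=
            ugen_of_unique_fixPt ⟨rfl, rfl⟩ huniq'
          rw [heq, hdev]
          exact hx cm (s₁' cm)
        · intro s₂'
          have huniq : ∀ a, FixPt x (fun _ => cm) a → a = (x cm, cm) := by
            rintro ⟨b, c⟩ ⟨hf1, hf2⟩
            simp only at hf1 hf2
            rw [← hf2] at hf1 ⊢
            rw [← hf1]
          have heq : Ugen u₁ u₂ u₂ x (fun _ => cm) = u₂ (x cm, cm) :=
            ugen_of_unique_fixPt ⟨rfl, rfl⟩ huniq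
          rw [heq]
          refine dev2_bound hcm (fun t _ => ?_) s₂'
          have hsum : (∑ b, u₂ (b, t b)) ≤ ∑ b, u₂ (b, y b) :=
            Finset.sum_le_sum fun b _ => hy b (t b)
          linarith [h2b.le]
      · -- the greedy pair itself is an equilibrium
        push_neg at h2a h2b
        refine ⟨x, y, ?_, ?_⟩
        · intro s₁'
          have heq : Ugen u₁ u₂ u₁ x y =
              ((∑ c, u₁ (x c, c)) + (∑ b, u₁ (b, y b))) /
                ((Fintype.card A₂ : ℝ) + (Fintype.card A₁ : ℝ)) := ugen_nofix hfix
          rw [heq]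
          refine dev1_bound (fun b => ?_) (fun t _ => ?_) s₁'
          · rw [le_div_iff₀ Ncard_pos, mul_comm]
            exact le_trans (by nlinarith [hbm b, Ncard_pos (A₁ := A₁) (A₂ := A₂)]) h2a
          · rw [mul_comm, div_mul_cancel₀ _ (ne_of_gt (Ncard_pos (A₁ := A₁) (A₂ := A₂)))]
            have hsum : (∑ c, u₁ (t c, c)) ≤ ∑ c, u₁ (x c, c) :=
              Finset.sum_le_sum fun c _ => hx c (t c)
            linarith
        · intro s₂'
          have heq : Ugen u₁ u₂ u₂ x y =
              ((∑ c, u₂ (x c, c)) + (∑ b, u₂ (b, y b))) /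
                ((Fintype.card A₂ : ℝ) + (Fintype.card A₁ : ℝ)) := ugen_nofix hfix
          rw [heq]
          refine dev2_bound (fun c => ?_) (fun t _ => ?_) s₂'
          · rw [le_div_iff₀ Ncard_pos, mul_comm]
            exact le_trans (by nlinarith [hcm c, Ncard_pos (A₁ := A₁) (A₂ := A₂)]) h2b
          · rw [mul_comm, div_mul_cancel₀ _ (ne_of_gt (Ncard_pos (A₁ := A₁) (A₂ := A₂)))]
            have hsum : (∑ b, u₂ (b, t b)) ≤ ∑ b, u₂ (b, y b) :=
              Finset.sum_le_sum fun b _ => hy b (t b)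
            linarith

end CondStrat2
end

section
/- In a finite two-person game, if a* is a pure Nash equilibrium, then the constant conditional strategy profile s with s_i(a_{-i}) = a*_i for all a_{-i} and both i is a conditional strategy equilibrium (under either the zero-disagreement or averaging outcome function), and its unique fixed point is a*. -/
namespace CondStrat2

open scoped Classical

variable {A₁ A₂ : Type*}

lemma upay_eq (u₁ u₂ u : A₁ × A₂ → ℝ) (s₁ : A₂ → A₁) (s₂ : A₁ → A₂) (a₀ : A₁ × A₂)
    (hfix : ∀ a, FixPt s₁ s₂ a ↔ a = a₀) :
    Upay u₁ u₂ u s₁ s₂ = u a₀ := by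
  have hb : ∃ a, BestFixPt u₁ u₂ s₁ s₂ a :=
    ⟨a₀, (hfix a₀).mpr rfl, fun a' ha' => by rw [(hfix a').mp ha']; exact ⟨le_rfl, le_rfl⟩⟩
  rw [Upay, dif_pos hb, (hfix _).mp hb.choose_spec.1]

lemma ugen_eq [Fintype A₁] [Fintype A₂] [DecidableEq A₁] [DecidableEq A₂]
    (u₁ u₂ u : A₁ × A₂ → ℝ) (s₁ : A₂ → A₁) (s₂ : A₁ → A₂) (a₀ : A₁ × A₂)
    (hfix : ∀ a, FixPt s₁ s₂ a ↔ a = a₀) :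
    Ugen u₁ u₂ u s₁ s₂ = u a₀ := by
  have hb : ∃ a, BestFixPt u₁ u₂ s₁ s₂ a :=
    ⟨a₀, (hfix a₀).mpr rfl, fun a' ha' => by rw [(hfix a').mp ha']; exact ⟨le_rfl, le_rfl⟩⟩
  rw [Ugen, dif_pos hb, (hfix _).mp hb.choose_spec.1]

lemma fix1 (s₁' : A₂ → A₁) (astar : A₁ × A₂) :
    ∀ a, FixPt s₁' (fun _ : A₁ => astar.2) a ↔ a = (s₁' astar.2, astar.2) := by
  rintro ⟨a₁, a₂⟩
  constructor
  · rintro ⟨h1, h2⟩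
    simp only at h1 h2
    subst h2; subst h1; rfl
  · rintro h; rw [Prod.ext_iff] at h
    obtain ⟨h1, h2⟩ := h
    simp only at h1 h2
    subst h1; subst h2; exact ⟨rfl, rfl⟩

lemma fix2 (s₂' : A₁ → A₂) (astar : A₁ × A₂) :
    ∀ a, FixPt (fun _ : A₂ => astar.1) s₂' a ↔ a = (astar.1, s₂' astar.1) := by
  rintro ⟨a₁, a₂⟩
  constructor
  · rintro ⟨h1, h2⟩
    simp only at h1 h2
    subst h1; subst h2; rfl
  · rintro h; rw [Prod.ext_iff] at h
    obtain ⟨h1, h2⟩ := h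
    simp only at h1 h2
    subst h1; subst h2; exact ⟨rfl, rfl⟩

/-- if `a*` is a pure Nash equilibrium, then the profile of
constant conditional strategies playing `a*` has unique fixed point `a*` and is
a conditional strategy equilibrium under both the zero-disagreement and the
averaging outcome functions. -/
theorem nash_constant_cse [Fintype A₁] [Fintype A₂] [Nonempty A₁] [Nonempty A₂]
    [DecidableEq A₁] [DecidableEq A₂]
    (u₁ u₂ : A₁ × A₂ → ℝ) (astar : A₁ × A₂)
    (hnash₁ : ∀ a₁' : A₁, u₁ (a₁', astar.2) ≤ u₁ astar)
    (hnash₂ : ∀ a₂' : A₂, u₂ (astar.1, a₂') ≤ u₂ astar) :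
    (∀ a, FixPt (fun _ : A₂ => astar.1) (fun _ : A₁ => astar.2) a ↔ a = astar) ∧
    CSE u₁ u₂ (fun _ => astar.1) (fun _ => astar.2) ∧
    (∀ s₁' : A₂ → A₁,
      Ugen u₁ u₂ u₁ s₁' (fun _ => astar.2) ≤
        Ugen u₁ u₂ u₁ (fun _ => astar.1) (fun _ => astar.2)) ∧
    (∀ s₂' : A₁ → A₂,
      Ugen u₁ u₂ u₂ (fun _ => astar.1) s₂' ≤
        Ugen u₁ u₂ u₂ (fun _ => astar.1) (fun _ => astar.2)) := by
  have hfixc : ∀ a, FixPt (fun _ : A₂ => astar.1) (fun _ : A₁ => astar.2) a ↔ a = astar := by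
    intro a
    have := fix1 (fun _ : A₂ => astar.1) astar a
    simpa using this
  refine ⟨hfixc, ⟨?_, ?_⟩, ?_, ?_⟩
  · intro s₁'
    rw [upay_eq u₁ u₂ u₁ _ _ astar hfixc, upay_eq u₁ u₂ u₁ _ _ _ (fix1 s₁' astar)]
    exact hnash₁ _
  · intro s₂'
    rw [upay_eq u₁ u₂ u₂ _ _ astar hfixc, upay_eq u₁ u₂ u₂ _ _ _ (fix2 s₂' astar)]
    exact hnash₂ _
  · intro s₁'
    rw [ugen_eq u₁ u₂ u₁ _ _ astar hfixc, ugen_eq u₁ u₂ u₁ _ _ _ (fix1 s₁' astar)]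
    exact hnash₁ _
  · intro s₂'
    rw [ugen_eq u₁ u₂ u₂ _ _ astar hfixc, ugen_eq u₁ u₂ u₂ _ _ _ (fix2 s₂' astar)]
    exact hnash₂ _

end CondStrat2
end

section
/- In a finite two-person game under the averaging outcome function, if s̄ is the pointwise best-response conditional profile and s̄ has no fixed point, then no unilateral deviation s_i of player i such that (s_i, s̄_{-i}) also has no fixed point is profitable: U_i(s_i, s̄_{-i}) ≤ U_i(s̄). -/
namespace CondStrat2

open scoped Classical

variable {A₁ A₂ : Type*}

/-- The disagreement multiset for a profile with no fixed point: one element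
`(s_i(a_{-i}), a_{-i})` for each player `i` and each opposing action `a_{-i}`,
of total size `|A₁| + |A₂|`. -/
noncomputable def DMul [Fintype A₁] [Fintype A₂]
    (s₁ : A₂ → A₁) (s₂ : A₁ → A₂) : Multiset (A₁ × A₂) :=
  (Finset.univ.val.map fun a₂ : A₂ => (s₁ a₂, a₂)) +
    (Finset.univ.val.map fun a₁ : A₁ => (a₁, s₂ a₁))

/-- The averaging payoff over the disagreement multiset. -/
noncomputable def avgPay [Fintype A₁] [Fintype A₂]
    (u : A₁ × A₂ → ℝ) (s₁ : A₂ → A₁) (s₂ : A₁ → A₂) : ℝ :=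
  ((DMul s₁ s₂).map u).sum / (DMul s₁ s₂).card

/-- if the pointwise best-response profile `s̄` has no fixed
point, then no unilateral deviation that also yields a profile without fixed
points is profitable under the averaging outcome function. -/
theorem br_no_fixpoint_deviation [Fintype A₁] [Fintype A₂]
    (u₁ u₂ : A₁ × A₂ → ℝ) (hu₁ : ∀ a, 0 ≤ u₁ a) (hu₂ : ∀ a, 0 ≤ u₂ a)
    (sb₁ : A₂ → A₁) (sb₂ : A₁ → A₂)
    (hbr₁ : ∀ a₂ a₁, u₁ (a₁, a₂) ≤ u₁ (sb₁ a₂, a₂))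
    (hbr₂ : ∀ a₁ a₂, u₂ (a₁, a₂) ≤ u₂ (a₁, sb₂ a₁))
    (hnofix : ¬ ∃ a, FixPt sb₁ sb₂ a) :
    (∀ s₁ : A₂ → A₁, (¬ ∃ a, FixPt s₁ sb₂ a) →
      avgPay u₁ s₁ sb₂ ≤ avgPay u₁ sb₁ sb₂) ∧
    (∀ s₂ : A₁ → A₂, (¬ ∃ a, FixPt sb₁ s₂ a) →
      avgPay u₂ sb₁ s₂ ≤ avgPay u₂ sb₁ sb₂) := by
  have key : ∀ (u : A₁ × A₂ → ℝ) (s₁ : A₂ → A₁) (s₂ : A₁ → A₂) (t₁ : A₂ → A₁) (t₂ : A₁ → A₂),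
      ((DMul s₁ s₂).map u).sum ≤ ((DMul t₁ t₂).map u).sum →
      avgPay u s₁ s₂ ≤ avgPay u t₁ t₂ := by
    intro u s₁ s₂ t₁ t₂ hsum
    unfold avgPay
    have hcard : ∀ (s₁ : A₂ → A₁) (s₂ : A₁ → A₂),
        (DMul s₁ s₂).card = Fintype.card A₂ + Fintype.card A₁ := by
      intro s₁ s₂; simp [DMul]
    rw [hcard, hcard]
    rcases Nat.eq_zero_or_pos (Fintype.card A₂ + Fintype.card A₁) with h | h
    · simp [h]
    · apply div_le_div_of_nonneg_right hsum; exact Nat.cast_nonneg _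
  constructor
  · intro s₁ _
    apply key
    unfold DMul
    simp only [Multiset.map_add, Multiset.sum_add, Multiset.map_map]
    gcongr with x
    · exact Multiset.sum_map_le_sum_map _ _ (fun a₂ _ => hbr₁ a₂ (s₁ a₂))
  · intro s₂ _
    apply key
    unfold DMul
    simp only [Multiset.map_add, Multiset.sum_add, Multiset.map_map]
    gcongr with x
    · exact Multiset.sum_map_le_sum_map _ _ (fun a₁ _ => hbr₂ a₁ (s₂ a₁))


end CondStrat2
end

section
/- (Mixed extension theorem) For every simple measurable conditional mixed strategy σ_i : ΔA_{-i} → ΔA_i of player i, there exists a finitely supported probability measure μ over pure conditional strategies ŝ_i : ΔA_{-i} → A_i (measurable w.r.t. the Borel σ-algebra on ΔA_{-i}) such that for all q_{-i} ∈ ΔA_{-i} and all a_i ∈ A_i, σ_i(q_{-i})(a_i) = μ({ŝ_i : ŝ_i(q_{-i}) = a_i}); i.e., σ_i is induced by μ via ŝ ↦ ∫ ŝ_i(q_{-i}) dμ. -/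
/-!
Let `v₁, …, v_L` be the finitely many values of `σ`. Draw an action `g vₗ` independently from
each distribution `vₗ`; the pure strategy `q ↦ g (σ q)` is measurable because it is constant on
the measurable cells `σ⁻¹' {vₗ}`. Under the product weight `∏ₗ vₗ (g vₗ)`, the action played at
`q` is distributed according to the marginal of the coordinate `σ q`, which is `σ q` itself.
-/

namespace CondMixed

open scoped Classical

/-- The space `ΔA_{-i}` of mixed strategy profiles of the players other than
`i`: the product of the standard simplices over the other players' action
sets. -/
def DeltaMinus {ι : Type*} (A : ι → Type*) [∀ j, Fintype (A j)] (i : ι) : Type _ :=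
  ∀ j : {j : ι // j ≠ i}, (stdSimplex ℝ (A j.1) : Set (A j.1 → ℝ))

noncomputable instance {ι : Type*} (A : ι → Type*) [∀ j, Fintype (A j)] (i : ι) :
    TopologicalSpace (DeltaMinus A i) := by
  unfold DeltaMinus; infer_instance

open Finset

section ProductWeight

variable {κ α : Type*} [Fintype κ] (P : κ → α → ℝ)

def prodWeight (g : κ → α) : ℝ := ∏ k, P k (g k)

variable {P}

theorem prodWeight_nonneg (hP : ∀ k a, 0 ≤ P k a) (g : κ → α) : 0 ≤ prodWeight P g :=
  prod_nonneg fun k _ => hP k (g k)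

theorem sum_prodWeight [DecidableEq κ] [Fintype α] (hP : ∀ k, ∑ a, P k a = 1) :
    ∑ g, prodWeight P g = 1 := by
  simp only [prodWeight, ← Fintype.prod_sum, hP, prod_const_one]

theorem sum_prodWeight_filter_apply_eq [DecidableEq κ] [Fintype α] [DecidableEq α]
    (hP : ∀ k, ∑ a, P k a = 1) (k : κ) (a : α) : ∑ g with g k = a, prodWeight P g = P k a := by
  have hslice : univ.filter (fun g : κ → α => g k = a) =
      Fintype.piFinset (Function.update (fun _ => (univ : Finset α)) k ({a} : Finset α)) := by
    rw [Fintype.piFinset_update_singleton_eq_filter_piFinset_eq (fun _ => univ) k (mem_univ a),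
      Fintype.piFinset_univ]
  calc ∑ g with g k = a, prodWeight P g
      = ∏ j, ∑ b ∈ Function.update (fun _ => (univ : Finset α)) k ({a} : Finset α) j, P j b := by
        rw [hslice, prod_univ_sum]; rfl
    _ = ∏ j, Function.update (fun _ => (1 : ℝ)) k (P k a) j :=
        Fintype.prod_congr _ _ fun j => by
          obtain rfl | hjk := eq_or_ne j k <;> simp [*]
    _ = P k a := by simp [prod_update_of_mem (mem_univ k)]

end ProductWeight

theorem sum_filter_image_fiberwise {G β M : Type*} [Fintype G] [DecidableEq β]
    [AddCommMonoid M] (f : G → β) (p : G → M) (Q : β → Prop) [DecidablePred Q] :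
    ∑ s ∈ (univ.image f).filter Q, ∑ g with f g = s, p g = ∑ g with Q (f g), p g := by
  rw [sum_fiberwise_eq_sum_filter]
  exact sum_congr (filter_congr fun g _ => by simp) fun _ _ => rfl

theorem measurableSet_preimage_of_finite_range {X β : Type*} [MeasurableSpace X] {f : X → β}
    (hf : (Set.range f).Finite) (hfib : ∀ b, MeasurableSet (f ⁻¹' {b})) (S : Set β) :
    MeasurableSet (f ⁻¹' S) := by
  rw [← Set.preimage_inter_range, ← Set.biUnion_preimage_singleton]
  exact (hf.subset Set.inter_subset_right).measurableSet_biUnion fun b _ => hfib b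

theorem mixed_extension_general {ι : Type*} (A : ι → Type*) [∀ j, Fintype (A j)]
    (i : ι)
    [MeasurableSpace (DeltaMinus A i)]
    (σ : DeltaMinus A i → (A i → ℝ))
    (hσΔ : ∀ q, σ q ∈ stdSimplex ℝ (A i))
    (hσsimple : (Set.range σ).Finite)
    (hσmeas : ∀ v : A i → ℝ, MeasurableSet (σ ⁻¹' {v})) :
    ∃ (F : Finset (DeltaMinus A i → A i)) (w : (DeltaMinus A i → A i) → ℝ),
      (∀ s ∈ F, ∀ a : A i, MeasurableSet (s ⁻¹' {a})) ∧
      (∀ s ∈ F, 0 ≤ w s) ∧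
      (∑ s ∈ F, w s) = 1 ∧
      ∀ (q : DeltaMinus A i) (a : A i),
        σ q a = ∑ s ∈ F.filter (fun s => s q = a), w s := by
  have := hσsimple.fintype
  let cell := Set.rangeFactorization σ
  let P : Set.range σ → A i → ℝ := Subtype.val
  have hP : ∀ v, P v ∈ stdSimplex ℝ (A i) := by
    rintro ⟨_, q, rfl⟩
    exact hσΔ q
  let pure : (Set.range σ → A i) → DeltaMinus A i → A i := fun g => g ∘ cell
  refine ⟨univ.image pure, fun s => ∑ g with pure g = s, prodWeight P g, ?_, ?_, ?_, ?_⟩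
  · have hcell : ∀ v, MeasurableSet (cell ⁻¹' {v}) := fun v => by
      convert hσmeas v using 1
      ext q
      simp [cell, Set.rangeFactorization, Subtype.ext_iff]
    rintro _ hs a
    obtain ⟨g, -, rfl⟩ := mem_image.mp hs
    exact measurableSet_preimage_of_finite_range (Set.toFinite _) hcell (g ⁻¹' {a})
  · exact fun _ _ => sum_nonneg fun g _ => prodWeight_nonneg (fun v => (hP v).1) g
  · rw [sum_fiberwise_of_maps_to fun g _ => mem_image_of_mem pure (mem_univ g)]
    exact sum_prodWeight fun v => (hP v).2
  · intro q a
    rw [sum_filter_image_fiberwise]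
    exact (sum_prodWeight_filter_apply_eq (fun v => (hP v).2) (cell q) a).symm

/-- Mixed extension: every simple, Borel measurable conditional
mixed strategy `σ_i : ΔA_{-i} → ΔA_i` is induced by a finitely supported
probability measure over measurable pure conditional strategies
`ŝ_i : ΔA_{-i} → A_i`: for all `q_{-i}` and `a_i`,
`σ_i(q_{-i})(a_i) = μ({ŝ_i : ŝ_i(q_{-i}) = a_i})`. -/
theorem mixed_extension {ι : Type*} (A : ι → Type*) [∀ j, Fintype (A j)]
    (i : ι) [Nonempty (A i)]
    [MeasurableSpace (DeltaMinus A i)] [BorelSpace (DeltaMinus A i)]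
    (σ : DeltaMinus A i → (A i → ℝ))
    (hσΔ : ∀ q, σ q ∈ stdSimplex ℝ (A i))
    (hσsimple : (Set.range σ).Finite)
    (hσmeas : ∀ v : A i → ℝ, MeasurableSet (σ ⁻¹' {v})) :
    ∃ (F : Finset (DeltaMinus A i → A i)) (w : (DeltaMinus A i → A i) → ℝ),
      (∀ s ∈ F, ∀ a : A i, MeasurableSet (s ⁻¹' {a})) ∧
      (∀ s ∈ F, 0 ≤ w s) ∧
      (∑ s ∈ F, w s) = 1 ∧
      ∀ (q : DeltaMinus A i) (a : A i),
        σ q a = ∑ s ∈ F.filter (fun s => s q = a), w s :=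
  mixed_extension_general A i σ hσΔ hσsimple hσmeas

end CondMixed
end
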